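/- Let g be a finite-dimensional nilpotent real Lie algebra with a hypercomplex structure (I,J,K) whose Obata connection ∇ is flat and such that ∇_X is a nilpotent endomorphism of g for every X ∈ g. Then for every i ≥ 0, if g_i^H ≠ 0 then g_{i+1}^H is a proper subspace of g_i^H. -/

import Mathlib

open Submodule

section Hyper

variable {L : Type*} [LieRing L] [LieAlgebra ℝ L]

/-- A complex structure operator on a real Lie algebra: `I² = -id` and the integrability
identity `[IX,IY] = [X,Y] + I[IX,Y] + I[X,IY]` (equivalent to `g^{1,0}` being a subalgebra). -/
def IsComplexStructureOp (I : L →ₗ[ℝ] L) : Prop :=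
  (∀ x, I (I x) = -x) ∧ ∀ x y : L, ⁅I x, I y⁆ = ⁅x, y⁆ + I ⁅I x, y⁆ + I ⁅x, I y⁆

/-- A hypercomplex structure: a triple of complex structure operators with `IJ = K`
(together with `I² = J² = K² = -id` this gives the quaternionic relations). -/
structure IsHypercomplex (I J K : L →ₗ[ℝ] L) : Prop where
  hI : IsComplexStructureOp I
  hJ : IsComplexStructureOp J
  hK : IsComplexStructureOp K
  hIJ : ∀ x, I (J x) = K x

/-- The Obata connection `∇_X` as an endomorphism of `L`:
`∇_X Y = ½([X,Y] + I[IX,Y] − J[X,JY] + K[IX,JY])`. -/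
noncomputable def obataOp (I J K : L →ₗ[ℝ] L) (X : L) : Module.End ℝ L :=
  (1/2 : ℝ) • (LieAlgebra.ad ℝ L X + I ∘ₗ LieAlgebra.ad ℝ L (I X)
    - J ∘ₗ LieAlgebra.ad ℝ L X ∘ₗ J + K ∘ₗ LieAlgebra.ad ℝ L (I X) ∘ₗ J)

/-- Flatness of the Obata connection. -/
def ObataFlat (I J K : L →ₗ[ℝ] L) : Prop :=
  ∀ X Y Z : L, obataOp I J K X (obataOp I J K Y Z) - obataOp I J K Y (obataOp I J K X Z)
    = obataOp I J K ⁅X, Y⁆ Z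

/-- The set of brackets of elements of a subspace `W`. -/
def bracketSet (W : Submodule ℝ L) : Set L := {z : L | ∃ x ∈ W, ∃ y ∈ W, z = ⁅x, y⁆}

/-- `H[W,W] = span([W,W] ∪ I[W,W] ∪ J[W,W] ∪ K[W,W])`. -/
def Hbr (I J K : L →ₗ[ℝ] L) (W : Submodule ℝ L) : Submodule ℝ L :=
  span ℝ (bracketSet W ∪ I '' bracketSet W ∪ J '' bracketSet W ∪ K '' bracketSet W)

/-- The descending series `g_0^H = g`, `g_i^H = H[g_{i-1}^H, g_{i-1}^H]`. -/
def gH (I J K : L →ₗ[ℝ] L) : ℕ → Submodule ℝ L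
  | 0 => ⊤
  | i + 1 => Hbr I J K (gH I J K i)

end Hyper

/-!
The Obata connection is flat, torsion-free and commutes with `I`, `J`, `K`. Flatness makes `∇` a
Lie algebra morphism `L → End L`; its image `A` consists of nilpotent endomorphisms, so by Engel's
theorem `L` is a nilpotent `A`-module. For `P ∈ {1, I, J, K}` torsion-freeness gives
`P⁅u, v⁆ = ∇_u (P v) - ∇_v (P u)`, hence `H[W, W] ≤ ⁅A, N⁆` whenever `W`, `I W`, `J W`, `K W ≤ N`.
If `H[W, W] = W`, then `W` is stable under `I`, `J`, `K`, so it lies in every term of the lower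
central series of the `A`-module `L`, and `W = 0`.
-/

section Obata

attribute [local instance] LieRing.ofAssociativeRing

variable {L : Type*} [LieRing L] [LieAlgebra ℝ L] {I J K : L →ₗ[ℝ] L}

namespace IsHypercomplex

lemma I_I (h : IsHypercomplex I J K) (z : L) : I (I z) = -z := h.hI.1 z
lemma J_J (h : IsHypercomplex I J K) (z : L) : J (J z) = -z := h.hJ.1 z
lemma K_K (h : IsHypercomplex I J K) (z : L) : K (K z) = -z := h.hK.1 z
lemma I_J (h : IsHypercomplex I J K) (z : L) : I (J z) = K z := h.hIJ z

lemma I_K (h : IsHypercomplex I J K) (z : L) : I (K z) = -J z := by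
  rw [← h.I_J, h.I_I]

lemma K_J (h : IsHypercomplex I J K) (z : L) : K (J z) = -I z := by
  rw [← h.I_J, h.J_J, map_neg]

lemma J_I_J (h : IsHypercomplex I J K) (z : L) : J (I (J z)) = I z := by
  have hI := congrArg I (show I (J (I (J z))) = -z by rw [h.I_J, h.I_J, h.K_K])
  rwa [h.I_I, map_neg, neg_inj] at hI

lemma J_K (h : IsHypercomplex I J K) (z : L) : J (K z) = I z := by
  rw [← h.I_J, h.J_I_J]

lemma J_I (h : IsHypercomplex I J K) (z : L) : J (I z) = -K z := by
  calc J (I z) = J (I (J (-J z))) := by rw [map_neg, h.J_J, neg_neg]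
    _ = -K z := by rw [h.J_I_J, map_neg, h.I_J]

lemma K_I (h : IsHypercomplex I J K) (z : L) : K (I z) = J z := by
  rw [← h.I_J, h.J_I, map_neg, h.I_K, neg_neg]

end IsHypercomplex

lemma obataOp_apply (X Z : L) :
    obataOp I J K X Z = (1/2 : ℝ) • (⁅X, Z⁆ + I ⁅I X, Z⁆ - J ⁅X, J Z⁆ + K ⁅I X, J Z⁆) := rfl

namespace IsHypercomplex

lemma obataOp_sub_obataOp_swap (h : IsHypercomplex I J K) (X Y : L) :
    obataOp I J K X Y - obataOp I J K Y X = ⁅X, Y⁆ := by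
  have hI := h.hI.2 X Y
  have hJ := h.hJ.2 X Y
  have hK := h.hK.2 (I X) (I Y)
  have e1 : ⁅Y, X⁆ = -⁅X, Y⁆ := (lie_skew Y X).symm
  have e2 : ⁅I Y, X⁆ = -⁅X, I Y⁆ := (lie_skew (I Y) X).symm
  have e3 : ⁅Y, J X⁆ = -⁅J X, Y⁆ := (lie_skew Y (J X)).symm
  have e4 : ⁅I Y, J X⁆ = -⁅J X, I Y⁆ := (lie_skew (I Y) (J X)).symm
  rw [obataOp_apply, obataOp_apply]
  simp only [map_neg, h.K_I, e1, e2, e3, e4] at hK ⊢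
  linear_combination (norm := module) (2:ℝ)⁻¹ • (-hI + hJ - hK)

lemma commute_obataOp_I (h : IsHypercomplex I J K) (X : L) : Commute (obataOp I J K X) I := by
  ext Y
  have h1 := h.hI.2 X (I Y)
  have h2 := h.hI.2 (J X) (K Y)
  have h3 := h.hJ.2 (I X) Y
  have h4 := h.hK.2 (I X) Y
  have h5 := congrArg I (h.hJ.2 X Y)
  have h6 := congrArg I (h.hK.2 X Y)
  rw [Module.End.mul_apply, Module.End.mul_apply, obataOp_apply, obataOp_apply]
  simp only [map_add, map_sub, map_neg, map_smul, h.I_I, h.I_J, h.I_K, h.J_I, h.K_I,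
    lie_neg, neg_lie] at h1 h2 h3 h4 h5 h6 ⊢
  linear_combination (norm := module) (2:ℝ)⁻¹ • (-h1 + h2 - h3 + h4 - h5 + h6)

lemma commute_obataOp_J (h : IsHypercomplex I J K) (X : L) : Commute (obataOp I J K X) J := by
  ext Y
  rw [Module.End.mul_apply, Module.End.mul_apply, obataOp_apply, obataOp_apply]
  simp only [map_add, map_sub, map_neg, map_smul, h.J_I, h.J_J, h.J_K, lie_neg]
  module

lemma commute_obataOp_K (h : IsHypercomplex I J K) (X : L) : Commute (obataOp I J K X) K := by
  have hIJ : I * J = K := LinearMap.ext h.I_J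
  simpa only [hIJ] using (h.commute_obataOp_I X).mul_right (h.commute_obataOp_J X)

lemma apply_lie_eq_obataOp_sub (h : IsHypercomplex I J K) {P : Module.End ℝ L}
    (hP : ∀ X, Commute (obataOp I J K X) P) (u v : L) :
    P ⁅u, v⁆ = obataOp I J K u (P v) - obataOp I J K v (P u) := by
  rw [← h.obataOp_sub_obataOp_swap u v, map_sub, ← Module.End.mul_apply, ← (hP u).eq,
    ← Module.End.mul_apply, ← (hP v).eq]
  rfl

end IsHypercomplex

noncomputable def obataHom (I J K : L →ₗ[ℝ] L) (hflat : ObataFlat I J K) :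
    L →ₗ⁅ℝ⁆ Module.End ℝ L where
  toFun := obataOp I J K
  map_add' X Y := by
    ext z
    simp only [obataOp_apply, LinearMap.add_apply, map_add, add_lie]
    module
  map_smul' c X := by
    ext z
    simp only [obataOp_apply, LinearMap.smul_apply, map_smul, smul_lie, RingHom.id_apply]
    module
  map_lie' {X Y} := by
    ext z
    exact (hflat X Y z).symm

lemma obataOp_mem_lie_top (hflat : ObataFlat I J K)
    {N : LieSubmodule ℝ (obataHom I J K hflat).range L} (X : L) {y : L} (hy : y ∈ N) :
    obataOp I J K X y ∈ ⁅(⊤ : LieIdeal ℝ (obataHom I J K hflat).range), N⁆ :=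
  LieSubmodule.lie_mem_lie (x := ⟨obataOp I J K X, X, rfl⟩) (LieSubmodule.mem_top _) hy

lemma isNilpotent_obataHom_range [FiniteDimensional ℝ L] (hflat : ObataFlat I J K)
    (hnil : ∀ X : L, IsNilpotent (obataOp I J K X)) :
    LieModule.IsNilpotent (obataHom I J K hflat).range L := by
  refine (LieModule.isNilpotent_iff_forall' (R := ℝ)).mpr fun ⟨_, X, hX⟩ => ?_
  subst hX
  exact hnil X

lemma bracketSet_mono {V W : Submodule ℝ L} (hVW : V ≤ W) : bracketSet V ⊆ bracketSet W := by
  rintro z ⟨x, hx, y, hy, rfl⟩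
  exact ⟨x, hVW hx, y, hVW hy, rfl⟩

lemma Hbr_mono (I J K : L →ₗ[ℝ] L) {V W : Submodule ℝ L} (hVW : V ≤ W) :
    Hbr I J K V ≤ Hbr I J K W := by
  have hb := bracketSet_mono hVW
  exact span_mono (Set.union_subset_union (Set.union_subset_union (Set.union_subset_union hb
    (Set.image_mono hb)) (Set.image_mono hb)) (Set.image_mono hb))

lemma gH_succ_le (I J K : L →ₗ[ℝ] L) : ∀ i, gH I J K (i + 1) ≤ gH I J K i
  | 0 => le_top
  | i + 1 => Hbr_mono I J K (gH_succ_le I J K i)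

lemma Hbr_le_of_forall {W M : Submodule ℝ L}
    (hM : ∀ b ∈ bracketSet W, b ∈ M ∧ I b ∈ M ∧ J b ∈ M ∧ K b ∈ M) : Hbr I J K W ≤ M := by
  refine span_le.mpr ?_
  rintro _ (((hb | ⟨b, hb, rfl⟩) | ⟨b, hb, rfl⟩) | ⟨b, hb, rfl⟩)
  exacts [(hM _ hb).1, (hM b hb).2.1, (hM b hb).2.2.1, (hM b hb).2.2.2]

lemma mem_Hbr_of_mem_bracketSet {W : Submodule ℝ L} {b : L} (hb : b ∈ bracketSet W) :
    b ∈ Hbr I J K W ∧ I b ∈ Hbr I J K W ∧ J b ∈ Hbr I J K W ∧ K b ∈ Hbr I J K W :=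
  ⟨subset_span (.inl (.inl (.inl hb))), subset_span (.inl (.inl (.inr ⟨b, hb, rfl⟩))),
    subset_span (.inl (.inr ⟨b, hb, rfl⟩)), subset_span (.inr ⟨b, hb, rfl⟩)⟩

namespace IsHypercomplex

lemma Hbr_le_comap (h : IsHypercomplex I J K) (W : Submodule ℝ L) :
    Hbr I J K W ≤ (Hbr I J K W).comap I ⊓ (Hbr I J K W).comap J ⊓ (Hbr I J K W).comap K := by
  refine Hbr_le_of_forall fun b hb => ?_
  obtain ⟨h1, hI, hJ, hK⟩ := mem_Hbr_of_mem_bracketSet (I := I) (J := J) (K := K) hb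
  simp only [Submodule.mem_inf, Submodule.mem_comap, h.I_I, h.I_J, h.I_K, h.J_I, h.J_J, h.J_K,
    h.K_I, h.K_J, h.K_K, neg_mem_iff]
  exact ⟨⟨⟨hI, hJ⟩, hK⟩, ⟨⟨h1, hK⟩, hJ⟩, ⟨⟨hK, h1⟩, hI⟩, ⟨⟨hJ, hI⟩, h1⟩⟩

lemma Hbr_le_lie_top (h : IsHypercomplex I J K) (hflat : ObataFlat I J K)
    {N : LieSubmodule ℝ (obataHom I J K hflat).range L} {W : Submodule ℝ L}
    (hW : ∀ w ∈ W, w ∈ N ∧ I w ∈ N ∧ J w ∈ N ∧ K w ∈ N) :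
    Hbr I J K W ≤ (⁅(⊤ : LieIdeal ℝ (obataHom I J K hflat).range), N⁆).toSubmodule := by
  have hmem : ∀ P : Module.End ℝ L, (∀ X, Commute (obataOp I J K X) P) → (∀ w ∈ W, P w ∈ N) →
      ∀ u ∈ W, ∀ v ∈ W, P ⁅u, v⁆ ∈ ⁅(⊤ : LieIdeal ℝ (obataHom I J K hflat).range), N⁆ := by
    intro P hPcomm hPN u hu v hv
    rw [h.apply_lie_eq_obataOp_sub hPcomm]
    exact sub_mem (obataOp_mem_lie_top hflat u (hPN v hv)) (obataOp_mem_lie_top hflat v (hPN u hu))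
  refine Hbr_le_of_forall ?_
  rintro _ ⟨u, hu, v, hv, rfl⟩
  exact ⟨hmem 1 (fun _ => .one_right _) (fun w hw => (hW w hw).1) u hu v hv,
    hmem I h.commute_obataOp_I (fun w hw => (hW w hw).2.1) u hu v hv,
    hmem J h.commute_obataOp_J (fun w hw => (hW w hw).2.2.1) u hu v hv,
    hmem K h.commute_obataOp_K (fun w hw => (hW w hw).2.2.2) u hu v hv⟩

lemma eq_bot_of_Hbr_eq_self [FiniteDimensional ℝ L] (h : IsHypercomplex I J K)
    (hflat : ObataFlat I J K) (hnil : ∀ X : L, IsNilpotent (obataOp I J K X))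
    {W : Submodule ℝ L} (hW : Hbr I J K W = W) : W = ⊥ := by
  have hstable : W ≤ W.comap I ⊓ W.comap J ⊓ W.comap K := hW ▸ h.Hbr_le_comap W
  have hlcs (k : ℕ) :
      W ≤ (LieModule.lowerCentralSeries ℝ (obataHom I J K hflat).range L k).toSubmodule := by
    induction k with
    | zero => exact le_top
    | succ k ih =>
      rw [LieModule.lowerCentralSeries_succ, ← hW]
      refine h.Hbr_le_lie_top hflat fun w hw => ?_
      obtain ⟨⟨hI, hJ⟩, hK⟩ := hstable hw
      exact ⟨ih hw, ih hI, ih hJ, ih hK⟩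
  obtain ⟨k, hk⟩ := (LieModule.isNilpotent_iff ℝ _ _).mp (isNilpotent_obataHom_range hflat hnil)
  simpa [hk] using hlcs k

end IsHypercomplex

end Obata

theorem gH_strict_descent_general {L : Type*} [LieRing L] [LieAlgebra ℝ L]
    [FiniteDimensional ℝ L]
    (I J K : L →ₗ[ℝ] L) (h : IsHypercomplex I J K)
    (hflat : ObataFlat I J K)
    (hnil : ∀ X : L, IsNilpotent (obataOp I J K X)) :
    ∀ i : ℕ, gH I J K i ≠ ⊥ → gH I J K (i + 1) < gH I J K i := by
  intro i hne
  exact (gH_succ_le I J K i).lt_of_ne fun hfix => hne (h.eq_bot_of_Hbr_eq_self hflat hnil hfix)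

/-- under the same hypotheses, each nonzero `g_i^H` strictly contains
`g_{i+1}^H`. -/
theorem gH_strict_descent {L : Type*} [LieRing L] [LieAlgebra ℝ L]
    [FiniteDimensional ℝ L] [LieRing.IsNilpotent L]
    (I J K : L →ₗ[ℝ] L) (h : IsHypercomplex I J K)
    (hflat : ObataFlat I J K)
    (hnil : ∀ X : L, IsNilpotent (obataOp I J K X)) :
    ∀ i : ℕ, gH I J K i ≠ ⊥ → gH I J K (i + 1) < gH I J K i :=
  gH_strict_descent_general I J K h hflat hnil
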